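/- Every nonzero element of D is a unit; that is, the quaternion algebra D of discriminant 15 is a division ring. -/

import Mathlib

open Quaternion

/-!
Since `q * star q` is the scalar `N(q) = a² + 3b² - 5c² - 15d²` (for `q = a + bi + cj + dk`),
`q` is invertible as soon as `N(q) ≠ 0`, so it suffices that this quaternary form is anisotropic
over `ℚ`, or, after clearing denominators, over `ℤ`. This is a `3`-adic descent: modulo `3` the
form is `a² + c²`, and `-1` is not a square mod `3`, so `3 ∣ a` and `3 ∣ c`; after dividing out,
the form reappears with the pairs `(a, c)` and `(b, d)` swapped, so `3 ∣ b` and `3 ∣ d` as well,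
and a nonzero solution cannot be divisible by every power of `3`.
-/

namespace QuaternionAlgebra

theorem isUnit_of_re_mul_star_ne_zero {K : Type*} [Field K] {c₁ c₂ c₃ : K}
    {a : ℍ[K,c₁,c₂,c₃]} (h : (a * star a).re ≠ 0) : IsUnit a := by
  have hnorm : IsUnit (a * star a) := by
    rw [mul_star_eq_coe, ← coe_algebraMap]
    exact h.isUnit.map _
  exact ((IsStarNormal.star_comm_self (x := a)).symm.isUnit_mul_iff.mp hnorm).1

theorem re_mul_star {R : Type*} [CommRing R] {c₁ c₃ : R} (a : ℍ[R,c₁,0,c₃]) :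
    (a * star a).re = a.re ^ 2 - c₁ * a.imI ^ 2 - c₃ * a.imJ ^ 2 + c₁ * c₃ * a.imK ^ 2 := by
  simp only [re_mul, re_star, imI_star, imJ_star, imK_star]
  ring

end QuaternionAlgebra

def disc15NormForm {R : Type*} [CommRing R] (a b c d : R) : R :=
  a ^ 2 + 3 * b ^ 2 - 5 * c ^ 2 - 15 * d ^ 2

theorem disc15NormForm_three_mul {R : Type*} [CommRing R] (a b c d : R) :
    disc15NormForm (3 * a) b (3 * c) d = 3 * disc15NormForm b a d c := by
  unfold disc15NormForm; ring

theorem Int.cast_disc15NormForm {R : Type*} [CommRing R] (a b c d : ℤ) :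
    ((disc15NormForm a b c d : ℤ) : R) = disc15NormForm (a : R) b c d := by
  simp [disc15NormForm]

theorem ZMod.eq_zero_of_sq_add_sq_eq_zero_three {x y : ZMod 3} (h : x ^ 2 + y ^ 2 = 0) :
    x = 0 ∧ y = 0 := by
  revert x y; decide

namespace Int

theorem three_dvd_of_disc15NormForm_eq_zero {a b c d : ℤ} (h : disc15NormForm a b c d = 0) :
    3 ∣ a ∧ 3 ∣ c := by
  have hmod : (a : ZMod 3) ^ 2 + (c : ZMod 3) ^ 2 = 0 := by
    have h3 : (3 : ZMod 3) = 0 := rfl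
    have := congrArg (Int.cast : ℤ → ZMod 3) h
    rw [Int.cast_disc15NormForm, Int.cast_zero, disc15NormForm] at this
    linear_combination this + (-b ^ 2 + 2 * c ^ 2 + 5 * d ^ 2 : ZMod 3) * h3
  obtain ⟨ha, hc⟩ := ZMod.eq_zero_of_sq_add_sq_eq_zero_three hmod
  exact ⟨(ZMod.intCast_zmod_eq_zero_iff_dvd a 3).mp ha,
    (ZMod.intCast_zmod_eq_zero_iff_dvd c 3).mp hc⟩

theorem exists_three_mul_of_disc15NormForm_eq_zero {a b c d : ℤ}
    (h : disc15NormForm a b c d = 0) :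
    ∃ a' b' c' d' : ℤ, a = 3 * a' ∧ b = 3 * b' ∧ c = 3 * c' ∧ d = 3 * d' ∧
      disc15NormForm a' b' c' d' = 0 := by
  obtain ⟨⟨a', rfl⟩, ⟨c', rfl⟩⟩ := three_dvd_of_disc15NormForm_eq_zero h
  have h' : disc15NormForm b a' d c' = 0 := by simpa [disc15NormForm_three_mul] using h
  obtain ⟨⟨b', rfl⟩, ⟨d', rfl⟩⟩ := three_dvd_of_disc15NormForm_eq_zero h'
  refine ⟨a', b', c', d', rfl, rfl, rfl, rfl, ?_⟩
  simpa [disc15NormForm_three_mul] using h'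

theorem pow_three_dvd_of_disc15NormForm_eq_zero (k : ℕ) {a b c d : ℤ}
    (h : disc15NormForm a b c d = 0) : 3 ^ k ∣ a ∧ 3 ^ k ∣ b ∧ 3 ^ k ∣ c ∧ 3 ^ k ∣ d := by
  induction k generalizing a b c d with
  | zero => simp
  | succ k ih =>
    obtain ⟨a', b', c', d', rfl, rfl, rfl, rfl, h'⟩ := exists_three_mul_of_disc15NormForm_eq_zero h
    obtain ⟨ha, hb, hc, hd⟩ := ih h'
    simp only [pow_succ']
    exact ⟨mul_dvd_mul_left 3 ha, mul_dvd_mul_left 3 hb, mul_dvd_mul_left 3 hc,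
      mul_dvd_mul_left 3 hd⟩

theorem eq_zero_of_forall_pow_three_dvd {a : ℤ} (h : ∀ k : ℕ, 3 ^ k ∣ a) : a = 0 := by
  by_contra ha
  obtain ⟨k, hk⟩ := (finiteMultiplicity_iff (a := 3)).mpr ⟨by decide, ha⟩
  exact hk (h (k + 1))

theorem eq_zero_of_disc15NormForm_eq_zero {a b c d : ℤ} (h : disc15NormForm a b c d = 0) :
    a = 0 ∧ b = 0 ∧ c = 0 ∧ d = 0 := by
  have hdvd := fun k ↦ pow_three_dvd_of_disc15NormForm_eq_zero k h
  exact ⟨eq_zero_of_forall_pow_three_dvd fun k ↦ (hdvd k).1,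
    eq_zero_of_forall_pow_three_dvd fun k ↦ (hdvd k).2.1,
    eq_zero_of_forall_pow_three_dvd fun k ↦ (hdvd k).2.2.1,
    eq_zero_of_forall_pow_three_dvd fun k ↦ (hdvd k).2.2.2⟩

end Int

theorem Rat.eq_zero_of_disc15NormForm_eq_zero {a b c d : ℚ} (h : disc15NormForm a b c d = 0) :
    a = 0 ∧ b = 0 ∧ c = 0 ∧ d = 0 := by
  obtain ⟨⟨N, hN⟩, hint⟩ :=
    IsLocalization.exist_integer_multiples_of_finite (nonZeroDivisors ℤ) ![a, b, c, d]
  obtain ⟨A, hA⟩ := hint 0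
  obtain ⟨B, hB⟩ := hint 1
  obtain ⟨C, hC⟩ := hint 2
  obtain ⟨D, hD⟩ := hint 3
  simp only [Fin.isValue, Matrix.cons_val, zsmul_eq_mul, eq_intCast] at hA hB hC hD
  have hN0 : (N : ℚ) ≠ 0 := by exact_mod_cast nonZeroDivisors.ne_zero hN
  have hform : disc15NormForm A B C D = 0 := by
    have hscale : disc15NormForm (A : ℚ) B C D = N ^ 2 * disc15NormForm a b c d := by
      rw [hA, hB, hC, hD]; unfold disc15NormForm; ring
    rwa [h, mul_zero, ← Int.cast_disc15NormForm, Int.cast_eq_zero] at hscale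
  obtain ⟨rfl, rfl, rfl, rfl⟩ := Int.eq_zero_of_disc15NormForm_eq_zero hform
  simp only [Int.cast_zero, zero_eq_mul, hN0, false_or] at hA hB hC hD
  exact ⟨hA, hB, hC, hD⟩

theorem quaternion_disc15_isUnit_of_ne_zero (q : ℍ[ℚ, -3, 5]) (hq : q ≠ 0) : IsUnit q := by
  refine QuaternionAlgebra.isUnit_of_re_mul_star_ne_zero fun hnorm ↦ hq ?_
  have hform : disc15NormForm q.re q.imI q.imJ q.imK = 0 := by
    rw [QuaternionAlgebra.re_mul_star] at hnorm
    unfold disc15NormForm; linear_combination hnorm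
  obtain ⟨h₁, h₂, h₃, h₄⟩ := Rat.eq_zero_of_disc15NormForm_eq_zero hform
  ext <;> assumption
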